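/- Let A ∈ ℝ^{n×d} with rank(A) ≥ k and σ_k(A) > σ_{k+1}(A), and let S be any matrix with n columns such that ‖A^T S^T S A − A^T A‖₂ ≤ ε·σ₁(A)² for some ε < gap_k(A). Then SA has rank at least k and d₂(V_{SA,k}, V_{A,k}) ≤ ε / (gap_k(A) − ε). -/

import Mathlib

open Matrix MeasureTheory

noncomputable section

/-- Euclidean norm of a vector in `ℝ^n`. -/
def vnorm {n : ℕ} (v : Fin n → ℝ) : ℝ := Real.sqrt (∑ i, v i ^ 2)

/-- Spectral norm of a matrix (operator norm as a map between Euclidean spaces). -/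
def spec {m n : ℕ} (M : Matrix (Fin m) (Fin n) ℝ) : ℝ :=
  ‖LinearMap.toContinuousLinearMap (Matrix.toEuclideanLin M)‖

/-- The four Moore-Penrose conditions. -/
def IsMP {m n : ℕ} (X : Matrix (Fin m) (Fin n) ℝ) (Y : Matrix (Fin n) (Fin m) ℝ) : Prop :=
  X * Y * X = X ∧ Y * X * Y = Y ∧ (X * Y)ᵀ = X * Y ∧ (Y * X)ᵀ = Y * X

/-- The Moore-Penrose pseudoinverse (it always exists and is unique, so this choice-based
definition picks out exactly the Moore-Penrose pseudoinverse). -/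
def pinv {m n : ℕ} (X : Matrix (Fin m) (Fin n) ℝ) : Matrix (Fin n) (Fin m) ℝ := by
  classical exact if h : ∃ Y, IsMP X Y then h.choose else 0

/-- Orthogonal projection onto the column space of a matrix: `P_X = X X⁺`. -/
def projCol {m n : ℕ} (X : Matrix (Fin m) (Fin n) ℝ) : Matrix (Fin m) (Fin m) ℝ := X * pinv X

/-- Distance between column spaces: `d₂(U, W) = ‖P_U - P_W‖₂`. -/
def d2 {m p q : ℕ} (U : Matrix (Fin m) (Fin p) ℝ) (W : Matrix (Fin m) (Fin q) ℝ) : ℝ :=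
  spec (projCol U - projCol W)

/-- `(U, s, V)` is a thin SVD of `X`: orthonormal columns, nonincreasing nonnegative
singular values, and `X = U (diag s) Vᵀ`. -/
def IsThinSVD {m n p : ℕ} (X : Matrix (Fin m) (Fin n) ℝ) (U : Matrix (Fin m) (Fin p) ℝ)
    (s : Fin p → ℝ) (V : Matrix (Fin n) (Fin p) ℝ) : Prop :=
  Uᵀ * U = 1 ∧ Vᵀ * V = 1 ∧ Antitone s ∧ (∀ i, 0 ≤ s i) ∧ X = U * Matrix.diagonal s * Vᵀ

/-- The matrix of the first `k` columns. -/
def firstCols {m p : ℕ} (U : Matrix (Fin m) (Fin p) ℝ) (k : ℕ) (h : k ≤ p) :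
    Matrix (Fin m) (Fin k) ℝ := U.submatrix id (Fin.castLE h)

/-- The matrix of the remaining columns (columns `k+1, …, p` in 1-based indexing). -/
def tailCols {m p : ℕ} (U : Matrix (Fin m) (Fin p) ℝ) (k : ℕ) (h : k ≤ p) :
    Matrix (Fin m) (Fin (p - k)) ℝ :=
  U.submatrix id (fun j => ⟨k + j.1, by have := j.2; omega⟩)

/-- `sv s i` is the `i`-th singular value (1-indexed), `0` past the end. -/
def sv {p : ℕ} (s : Fin p → ℝ) (i : ℕ) : ℝ := by
  classical exact if h : i - 1 < p then s ⟨i - 1, h⟩ else 0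

end

/-!
Put `G = AᵀA`, `G' = (SA)ᵀ(SA)` and `e = ‖G' - G‖ ≤ ε σ₁(A)²`, so `|‖SAw‖² - ‖Aw‖²| ≤ e ‖w‖²`.
On the span of the top `k` right singular vectors of `A` we have `‖Aw‖² ≥ σ_k(A)² ‖w‖²`, hence
`‖SAw‖² > 0` there, which gives the rank bound; the same min–max argument gives Weyl's inequalities
`σ_j(A)² ≤ σ_j(SA)² + e` and `σ_j(SA)² ≤ σ_j(A)² + e`.

Let `P`, `Q` be the projections onto the top-`k` right singular spaces of `A` and `SA`, and `H` the
inverse of `G` on the range of `P`. The identity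
`(1 - Q) P = G' (1 - Q) · (1 - Q) P · H - (1 - Q) (G' - G) H`, with `‖G' (1 - Q)‖ ≤ σ_{k+1}(SA)²`
and `‖H‖ ≤ σ_k(A)⁻²`, gives the Davis–Kahan bound `‖(1 - Q) P‖ ≤ e / (σ_k(A)² - σ_{k+1}(SA)²)`;
symmetrically for `‖(1 - P) Q‖`. Both denominators are at least `σ_k(A)² - σ_{k+1}(A)² - e` by
Weyl, and `‖Q - P‖` is at most the larger of the two norms.
-/

open scoped Matrix.Norms.L2Operator RealInnerProductSpace

lemma spec_eq_norm {m n : ℕ} (M : Matrix (Fin m) (Fin n) ℝ) : spec M = ‖M‖ := rfl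

theorem norm_one_sub_mul_le_norm_sub_div {R : Type*} [NormedRing R] {G G' H P Q : R} {a μ : ℝ}
    (hQ : IsIdempotentElem Q) (hQ1 : ‖1 - Q‖ ≤ 1) (hG'Q : Commute G' Q) (hGH : G * H = P)
    (hPH : P * H = H) (hH : ‖H‖ ≤ a⁻¹) (hμ : ‖G' * (1 - Q)‖ ≤ μ) (hμa : μ < a) :
    ‖(1 - Q) * P‖ ≤ ‖G' - G‖ / (a - μ) := by
  have ha : 0 < a := ((norm_nonneg _).trans hμ).trans_lt hμa
  have key : (1 - Q) * P = G' * (1 - Q) * ((1 - Q) * P) * H - (1 - Q) * (G' - G) * H := by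
    have hassoc : G' * (1 - Q) * ((1 - Q) * P) * H = G' * ((1 - Q) * (1 - Q)) * (P * H) := by
      simp only [mul_assoc]
    rw [hassoc, hQ.one_sub.eq, hPH, ((Commute.one_right G').sub_right hG'Q).eq, ← hGH]
    noncomm_ring
  set τ := ‖(1 - Q) * P‖
  have hτ : τ ≤ μ * τ * a⁻¹ + ‖G' - G‖ * a⁻¹ := by
    calc τ = ‖G' * (1 - Q) * ((1 - Q) * P) * H - (1 - Q) * (G' - G) * H‖ := congrArg norm key
      _ ≤ ‖G' * (1 - Q)‖ * τ * ‖H‖ + ‖1 - Q‖ * ‖G' - G‖ * ‖H‖ :=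
          (norm_sub_le _ _).trans (add_le_add norm_mul₃_le norm_mul₃_le)
      _ ≤ μ * τ * a⁻¹ + 1 * ‖G' - G‖ * a⁻¹ := by
          gcongr
          exact mul_nonneg ((norm_nonneg _).trans hμ) (norm_nonneg _)
      _ = μ * τ * a⁻¹ + ‖G' - G‖ * a⁻¹ := by ring
  rw [le_div_iff₀ (sub_pos.2 hμa)]
  have := mul_le_mul_of_nonneg_right hτ ha.le
  field_simp at this
  linarith

namespace ContinuousLinearMap

variable {E : Type*} [NormedAddCommGroup E] [InnerProductSpace ℝ E]

lemma apply_apply_of_isIdempotentElem {p : E →L[ℝ] E} (hp : IsIdempotentElem p) (x : E) :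
    p (p x) = p x :=
  congr($(hp.eq) x)

variable [CompleteSpace E]

lemma inner_apply_one_sub_apply_eq_zero {q : E →L[ℝ] E} (hq : IsStarProjection q) (x y : E) :
    ⟪q x, (1 - q) y⟫ = 0 := by
  rw [← adjoint_inner_right, ← star_eq_adjoint, hq.isSelfAdjoint.star_eq]
  change ⟪x, (q * (1 - q)) y⟫ = 0
  rw [hq.mul_one_sub_self, _root_.zero_apply, inner_zero_right]

lemma norm_sub_le_of_isStarProjection {p q : E →L[ℝ] E} (hp : IsStarProjection p)
    (hq : IsStarProjection q) {c : ℝ} (hc : 0 ≤ c) (hpq : ‖(1 - q) * p‖ ≤ c)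
    (hqp : ‖(1 - p) * q‖ ≤ c) : ‖q - p‖ ≤ c := by
  have hqp' : ‖q * (1 - p)‖ ≤ c := by
    rwa [← norm_star, star_mul, hq.isSelfAdjoint.star_eq, hp.one_sub.isSelfAdjoint.star_eq]
  refine opNorm_le_bound _ hc fun x => ?_
  set u := p x
  set v := (1 - p) x
  have hqv : ‖q v‖ ≤ c * ‖v‖ := by
    have h := (q * (1 - p)).le_of_opNorm_le hqp' v
    rwa [show (q * (1 - p)) v = q v from
      congrArg q (apply_apply_of_isIdempotentElem hp.one_sub.isIdempotentElem x)] at h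
  have hqu : ‖(1 - q) u‖ ≤ c * ‖u‖ := by
    have h := ((1 - q) * p).le_of_opNorm_le hpq u
    rwa [show ((1 - q) * p) u = (1 - q) u from
      congrArg (1 - q : E →L[ℝ] E) (apply_apply_of_isIdempotentElem hp.isIdempotentElem x)] at h
  have hx : ‖x‖ ^ 2 = ‖u‖ ^ 2 + ‖v‖ ^ 2 := by
    rw [show x = u + v by simp [u, v], norm_add_sq_real, inner_apply_one_sub_apply_eq_zero hp]
    ring
  have hy : ‖(q - p) x‖ ^ 2 = ‖q v‖ ^ 2 + ‖(1 - q) u‖ ^ 2 := by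
    have : (q - p) x = q v - (1 - q) u := by
      simp only [u, v, _root_.sub_apply, map_sub, one_apply_eq_self]
      abel
    rw [this, norm_sub_sq_real, inner_apply_one_sub_apply_eq_zero hq]; ring
  have : ‖(q - p) x‖ ^ 2 ≤ (c * ‖x‖) ^ 2 := by
    rw [hy, mul_pow, hx]
    nlinarith [pow_le_pow_left₀ (norm_nonneg _) hqv 2, pow_le_pow_left₀ (norm_nonneg _) hqu 2]
  exact (pow_le_pow_iff_left₀ (norm_nonneg _) (by positivity) two_ne_zero).1 this

end ContinuousLinearMap

namespace Matrix

section L2OpNorm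

variable {m n : Type*} [Fintype m] [Fintype n]

lemma l2_opNorm_one_le [DecidableEq n] : ‖(1 : Matrix n n ℝ)‖ ≤ 1 := by
  rw [← diagonal_one, l2_opNorm_diagonal]
  exact (pi_norm_le_iff_of_nonneg zero_le_one).2 fun _ => by simp

lemma l2_opNorm_transpose [DecidableEq m] [DecidableEq n] (A : Matrix m n ℝ) : ‖Aᵀ‖ = ‖A‖ := by
  rw [← conjTranspose_eq_transpose_of_trivial, l2_opNorm_conjTranspose]

lemma l2_opNorm_le_one_of_transpose_mul_self [DecidableEq n] {V : Matrix m n ℝ}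
    (hV : Vᵀ * V = 1) : ‖V‖ ≤ 1 := by
  have h : ‖V‖ * ‖V‖ ≤ 1 := by
    rw [← l2_opNorm_conjTranspose_mul_self, conjTranspose_eq_transpose_of_trivial, hV]
    exact l2_opNorm_one_le
  nlinarith [norm_nonneg V]

lemma abs_dotProduct_mulVec_le [DecidableEq n] (M : Matrix n n ℝ) (w : n → ℝ) :
    |w ⬝ᵥ M *ᵥ w| ≤ ‖M‖ * (w ⬝ᵥ w) := by
  set x := WithLp.toLp 2 w
  have hx : ‖x‖ ^ 2 = w ⬝ᵥ w := by
    rw [← real_inner_self_eq_norm_sq, EuclideanSpace.inner_toLp_toLp, star_trivial]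
  calc |w ⬝ᵥ M *ᵥ w| = |⟪x, toEuclideanCLM (𝕜 := ℝ) M x⟫| := by rw [inner_toEuclideanCLM]
    _ ≤ ‖x‖ * ‖toEuclideanCLM (𝕜 := ℝ) M x‖ := abs_real_inner_le_norm _ _
    _ ≤ ‖x‖ * (‖M‖ * ‖x‖) := by gcongr; exact (toEuclideanCLM (𝕜 := ℝ) M).le_opNorm x
    _ = ‖M‖ * (w ⬝ᵥ w) := by rw [← hx]; ring

lemma norm_sub_le_of_isStarProjection [DecidableEq n] {P Q : Matrix n n ℝ}
    (hP : IsStarProjection P) (hQ : IsStarProjection Q) {c : ℝ} (hc : 0 ≤ c)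
    (hPQ : ‖(1 - Q) * P‖ ≤ c) (hQP : ‖(1 - P) * Q‖ ≤ c) : ‖Q - P‖ ≤ c := by
  have hmap {R : Matrix n n ℝ} (hR : IsStarProjection R) :
      IsStarProjection (toEuclideanCLM (𝕜 := ℝ) R) :=
    ⟨hR.isIdempotentElem.map _, hR.isSelfAdjoint.map _⟩
  simp only [cstar_norm_def, map_sub, map_mul, map_one] at hPQ hQP ⊢
  exact ContinuousLinearMap.norm_sub_le_of_isStarProjection (hmap hP) (hmap hQ) hc hPQ hQP

end L2OpNorm

section Orthonormal

variable {m n : Type*} [Fintype m] [Fintype n]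

lemma mulVec_dotProduct_mulVec_self (X : Matrix m n ℝ) (w : n → ℝ) :
    X *ᵥ w ⬝ᵥ X *ᵥ w = w ⬝ᵥ (Xᵀ * X) *ᵥ w := by
  rw [← mulVec_mulVec, dotProduct_mulVec _ Xᵀ, vecMul_transpose, dotProduct_comm]

lemma dotProduct_mulVec_self_of_transpose_mul_self [DecidableEq n] {U : Matrix m n ℝ}
    (hU : Uᵀ * U = 1) (x : n → ℝ) : U *ᵥ x ⬝ᵥ U *ᵥ x = x ⬝ᵥ x := by
  rw [mulVec_dotProduct_mulVec_self, hU, one_mulVec]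

lemma isStarProjection_mul_transpose [DecidableEq n] {W : Matrix m n ℝ} (hW : Wᵀ * W = 1) :
    IsStarProjection (W * Wᵀ) where
  isIdempotentElem := by
    rw [IsIdempotentElem, Matrix.mul_assoc, ← Matrix.mul_assoc Wᵀ, hW, Matrix.one_mul]
  isSelfAdjoint := by
    rw [IsSelfAdjoint, star_eq_conjTranspose, conjTranspose_eq_transpose_of_trivial,
      transpose_mul, transpose_transpose]

lemma transpose_mulVec_dotProduct_le [DecidableEq m] [DecidableEq n] {V : Matrix m n ℝ}
    (hV : Vᵀ * V = 1) (w : m → ℝ) : Vᵀ *ᵥ w ⬝ᵥ Vᵀ *ᵥ w ≤ w ⬝ᵥ w := by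
  have hP : ‖V * Vᵀ‖ ≤ 1 := (isStarProjection_mul_transpose hV).norm_le
  have hw : 0 ≤ w ⬝ᵥ w := by simpa using dotProduct_star_self_nonneg w
  calc Vᵀ *ᵥ w ⬝ᵥ Vᵀ *ᵥ w ≤ |w ⬝ᵥ (V * Vᵀ) *ᵥ w| := by
        rw [mulVec_dotProduct_mulVec_self, transpose_transpose]; exact le_abs_self _
    _ ≤ ‖V * Vᵀ‖ * (w ⬝ᵥ w) := abs_dotProduct_mulVec_le _ _
    _ ≤ w ⬝ᵥ w := by nlinarith

lemma mulVec_dotProduct_mulVec_le_add [DecidableEq n] {m' : Type*} [Fintype m']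
    (X : Matrix m n ℝ) (Y : Matrix m' n ℝ) (w : n → ℝ) :
    X *ᵥ w ⬝ᵥ X *ᵥ w ≤ Y *ᵥ w ⬝ᵥ Y *ᵥ w + ‖Yᵀ * Y - Xᵀ * X‖ * (w ⬝ᵥ w) := by
  have h := neg_le_of_abs_le (abs_dotProduct_mulVec_le (Yᵀ * Y - Xᵀ * X) w)
  rw [sub_mulVec, dotProduct_sub, ← mulVec_dotProduct_mulVec_self,
    ← mulVec_dotProduct_mulVec_self] at h
  linarith

end Orthonormal

lemma exists_ne_zero_mulVec_eq_zero {a b : ℕ} (M : Matrix (Fin a) (Fin b) ℝ) (h : a < b) :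
    ∃ c ≠ 0, M *ᵥ c = 0 := by
  have := LinearMap.ker_ne_bot_of_finrank_lt (f := M.mulVecLin) (by simpa using h)
  obtain ⟨c, hc, hc0⟩ := (Submodule.ne_bot_iff _).1 this
  exact ⟨c, hc0, hc⟩

lemma le_rank_of_ker_mulVecLin_mul_eq_bot {m n k : ℕ} (M : Matrix (Fin m) (Fin n) ℝ)
    (B : Matrix (Fin n) (Fin k) ℝ) (h : LinearMap.ker (M * B).mulVecLin = ⊥) : k ≤ M.rank := by
  have hinj : Function.Injective (M * B).mulVecLin := LinearMap.ker_eq_bot.1 h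
  calc k = (M * B).rank := by
        rw [rank, LinearMap.finrank_range_of_inj hinj, Module.finrank_fin_fun]
    _ ≤ M.rank := rank_mul_le_left M B

def diagConj {m n : Type*} [Fintype n] [DecidableEq n] (V : Matrix m n ℝ) (f : n → ℝ) :
    Matrix m m ℝ :=
  V * diagonal f * Vᵀ

lemma diagConj_sub {m n : Type*} [Fintype n] [DecidableEq n] (V : Matrix m n ℝ) (f g : n → ℝ) :
    diagConj V f - diagConj V g = diagConj V (f - g) := by
  rw [diagConj, diagConj, diagConj, ← Matrix.sub_mul, ← Matrix.mul_sub, diagonal_sub]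
  rfl

section DiagConj

variable {m n : Type*} [Fintype m] [Fintype n] [DecidableEq n]

lemma diagConj_mul_diagConj {V : Matrix m n ℝ} (hV : Vᵀ * V = 1) (f g : n → ℝ) :
    diagConj V f * diagConj V g = diagConj V (f * g) := by
  simp only [diagConj, Matrix.mul_assoc]
  rw [← Matrix.mul_assoc Vᵀ V, hV, Matrix.one_mul, ← Matrix.mul_assoc (diagonal f),
    diagonal_mul_diagonal]
  rfl

lemma l2_opNorm_diagConj_le [DecidableEq m] {V : Matrix m n ℝ} (hV : Vᵀ * V = 1)
    {f : n → ℝ} {b : ℝ} (hb : 0 ≤ b) (hf : ∀ i, |f i| ≤ b) : ‖diagConj V f‖ ≤ b := by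
  have hV1 := l2_opNorm_le_one_of_transpose_mul_self hV
  calc ‖diagConj V f‖ ≤ ‖V‖ * ‖diagonal f‖ * ‖Vᵀ‖ :=
        (l2_opNorm_mul _ _).trans (by gcongr; exact l2_opNorm_mul _ _)
    _ ≤ 1 * b * 1 := by
        rw [l2_opNorm_diagonal, l2_opNorm_transpose]
        gcongr
        exact (pi_norm_le_iff_of_nonneg hb).2 hf
    _ = b := by ring

end DiagConj

def ltIndicator {p : ℕ} (k : ℕ) : Fin p → ℝ := fun i => if (i : ℕ) < k then 1 else 0

section FirstCols

variable {m p k : ℕ}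

lemma mul_firstCols {l : ℕ} (M : Matrix (Fin l) (Fin m) ℝ) (V : Matrix (Fin m) (Fin p) ℝ)
    (h : k ≤ p) : M * firstCols V k h = firstCols (M * V) k h :=
  (submatrix_mul M V id id (Fin.castLE h) Function.bijective_id).symm

lemma firstCols_transpose_mul_self {V : Matrix (Fin m) (Fin p) ℝ} (hV : Vᵀ * V = 1)
    (h : k ≤ p) : (firstCols V k h)ᵀ * firstCols V k h = 1 := by
  rw [firstCols, transpose_submatrix,
    ← submatrix_mul Vᵀ V (Fin.castLE h) id (Fin.castLE h) Function.bijective_id, hV]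
  exact submatrix_one _ (Fin.castLE_injective h)

lemma firstCols_one_mulVec_apply_of_le (h : k ≤ p) (c : Fin k → ℝ) {i : Fin p} (hi : k ≤ i) :
    (firstCols (1 : Matrix (Fin p) (Fin p) ℝ) k h *ᵥ c) i = 0 := by
  simp only [mulVec, dotProduct, firstCols, submatrix_apply, id, one_apply, Fin.ext_iff,
    Fin.val_castLE]
  exact Finset.sum_eq_zero fun j _ => by simp [show (i : ℕ) ≠ j by omega]

lemma firstCols_one_mul_transpose (h : k ≤ p) :
    firstCols (1 : Matrix (Fin p) (Fin p) ℝ) k h * (firstCols 1 k h)ᵀ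
      = diagonal (ltIndicator k) := by
  ext i i'
  by_cases hi' : (i' : ℕ) < k
  · obtain ⟨j', rfl⟩ : ∃ j', Fin.castLE h j' = i' := ⟨⟨i', hi'⟩, rfl⟩
    simp only [firstCols, mul_apply, one_apply, diagonal_apply, transpose_apply, submatrix_apply,
      id, (Fin.castLE_injective h).eq_iff, ltIndicator]
    split_ifs <;> simp_all
  · have hne : ∀ j : Fin k, Fin.castLE h j ≠ i' := fun j hj => hi' (hj ▸ j.2)
    simp [firstCols, mul_apply, one_apply, diagonal_apply, hne, ltIndicator]
    rintro rfl
    omega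

lemma firstCols_mul_transpose (V : Matrix (Fin m) (Fin p) ℝ) (h : k ≤ p) :
    firstCols V k h * (firstCols V k h)ᵀ = diagConj V (ltIndicator k) := by
  have hW : firstCols V k h = V * firstCols (1 : Matrix (Fin p) (Fin p) ℝ) k h := by
    rw [mul_firstCols, Matrix.mul_one]
  rw [hW, transpose_mul, diagConj, ← firstCols_one_mul_transpose h]
  simp only [Matrix.mul_assoc]

end FirstCols

end Matrix

open Matrix

lemma IsMP.eq_transpose {m n : ℕ} {N : Matrix (Fin m) (Fin n) ℝ} {Y : Matrix (Fin n) (Fin m) ℝ}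
    (hN : Nᵀ * N = 1) (hY : IsMP N Y) : Y = Nᵀ := by
  obtain ⟨hNYN, -, hNY, -⟩ := hY
  calc Y = Nᵀ * (N * Y) := by rw [← Matrix.mul_assoc, hN, Matrix.one_mul]
    _ = Nᵀ * (N * Y)ᵀ := by rw [hNY]
    _ = (N * Y * N)ᵀ := by rw [transpose_mul, transpose_mul, transpose_mul]
    _ = Nᵀ := by rw [hNYN]

lemma projCol_eq_mul_transpose {m n : ℕ} {N : Matrix (Fin m) (Fin n) ℝ} (hN : Nᵀ * N = 1) :
    projCol N = N * Nᵀ := by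
  have hex : ∃ Y, IsMP N Y := ⟨Nᵀ, by
    refine ⟨?_, ?_, ?_, ?_⟩ <;>
      simp only [Matrix.mul_assoc, hN, Matrix.mul_one, Matrix.one_mul, transpose_mul,
        transpose_transpose, transpose_one]⟩
  rw [projCol, pinv, dif_pos hex, hex.choose_spec.eq_transpose hN]

section Sv

variable {p : ℕ} {s : Fin p → ℝ}

lemma sv_nonneg (hs0 : ∀ i, 0 ≤ s i) (j : ℕ) : 0 ≤ sv s j := by
  unfold sv; split_ifs <;> simp [hs0]

lemma sv_of_le {j : ℕ} (hj : p ≤ j - 1) : sv s j = 0 := by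
  rw [sv, dif_neg (by omega)]

lemma le_sv_of_le (hs : Antitone s) {i : Fin p} {j : ℕ} (hij : j ≤ i + 1) : s i ≤ sv s j := by
  rw [sv, dif_pos (by omega)]
  exact hs (Fin.mk_le_of_le_val (by omega))

lemma sv_le_of_lt (hs : Antitone s) (hs0 : ∀ i, 0 ≤ s i) {i : Fin p} {j : ℕ} (hij : (i : ℕ) < j) :
    sv s j ≤ s i := by
  unfold sv
  split_ifs
  · exact hs (Fin.le_def.2 (by dsimp only; omega))
  · exact hs0 i

lemma sv_antitone (hs : Antitone s) (hs0 : ∀ i, 0 ≤ s i) : Antitone (sv s) := by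
  intro j j' hjj'
  by_cases hj' : j' - 1 < p
  · calc sv s j' = s ⟨j' - 1, hj'⟩ := dif_pos hj'
      _ ≤ sv s j := le_sv_of_le hs (by dsimp only; omega)
  · rw [sv_of_le (by omega)]
    exact sv_nonneg hs0 j

end Sv

namespace IsThinSVD

variable {m n p : ℕ} {X : Matrix (Fin m) (Fin n) ℝ} {U : Matrix (Fin m) (Fin p) ℝ}
  {s : Fin p → ℝ} {V : Matrix (Fin n) (Fin p) ℝ}

lemma right_orthonormal (hX : IsThinSVD X U s V) : Vᵀ * V = 1 := hX.2.1

lemma antitone (hX : IsThinSVD X U s V) : Antitone s := hX.2.2.1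

lemma nonneg (hX : IsThinSVD X U s V) : ∀ i, 0 ≤ s i := hX.2.2.2.1

lemma transpose_mul_self (hX : IsThinSVD X U s V) : Xᵀ * X = diagConj V (s * s) := by
  obtain ⟨hU, -, -, -, rfl⟩ := hX
  simp only [diagConj, transpose_mul, transpose_transpose, diagonal_transpose, Matrix.mul_assoc]
  rw [← Matrix.mul_assoc Uᵀ U, hU, Matrix.one_mul, ← Matrix.mul_assoc (diagonal s),
    diagonal_mul_diagonal]
  rfl

lemma mulVec_dotProduct_mulVec (hX : IsThinSVD X U s V) (w : Fin n → ℝ) :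
    X *ᵥ w ⬝ᵥ X *ᵥ w = ∑ i, (s i * (Vᵀ *ᵥ w) i) ^ 2 := by
  obtain ⟨hU, -, -, -, rfl⟩ := hX
  rw [← mulVec_mulVec, ← mulVec_mulVec, dotProduct_mulVec_self_of_transpose_mul_self hU,
    dotProduct]
  simp only [mulVec_diagonal, sq]

lemma sq_sv_mul_le (hX : IsThinSVD X U s V) {k : ℕ} (h : k ≤ p) (c : Fin k → ℝ) :
    sv s k ^ 2 * (c ⬝ᵥ c)
      ≤ X *ᵥ (firstCols V k h *ᵥ c) ⬝ᵥ X *ᵥ (firstCols V k h *ᵥ c) := by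
  set z := firstCols (1 : Matrix (Fin p) (Fin p) ℝ) k h *ᵥ c
  have hVz : Vᵀ *ᵥ (firstCols V k h *ᵥ c) = z := by
    rw [mulVec_mulVec, mul_firstCols, hX.right_orthonormal]
  have hzz : z ⬝ᵥ z = c ⬝ᵥ c :=
    dotProduct_mulVec_self_of_transpose_mul_self
      (firstCols_transpose_mul_self (by rw [transpose_one, mul_one]) h) c
  rw [hX.mulVec_dotProduct_mulVec, hVz, ← hzz, dotProduct, Finset.mul_sum]
  refine Finset.sum_le_sum fun i _ => ?_
  rcases lt_or_ge (i : ℕ) k with hi | hi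
  · rw [mul_pow, ← sq]
    gcongr
    exacts [sv_nonneg hX.nonneg k, sv_le_of_lt hX.antitone hX.nonneg hi]
  · simp [z, firstCols_one_mulVec_apply_of_le h c hi]

lemma le_sq_mul_of_firstCols_transpose_mulVec_eq_zero (hX : IsThinSVD X U s V) {j : ℕ}
    (h : j ≤ p) {b : ℝ} (hsb : ∀ i : Fin p, j ≤ i → s i ≤ b) {w : Fin n → ℝ}
    (hw : (firstCols V j h)ᵀ *ᵥ w = 0) :
    X *ᵥ w ⬝ᵥ X *ᵥ w ≤ b ^ 2 * (w ⬝ᵥ w) := by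
  set y := Vᵀ *ᵥ w
  have hy : ∀ i : Fin p, (i : ℕ) < j → y i = 0 := fun i hi => congrFun hw ⟨i, hi⟩
  calc X *ᵥ w ⬝ᵥ X *ᵥ w = ∑ i, (s i * y i) ^ 2 := hX.mulVec_dotProduct_mulVec w
    _ ≤ ∑ i, b ^ 2 * (y i * y i) := by
        refine Finset.sum_le_sum fun i _ => ?_
        rcases lt_or_ge (i : ℕ) j with hi | hi
        · simp [hy i hi]
        · rw [mul_pow, ← sq]
          gcongr
          exacts [hX.nonneg i, hsb i hi]
    _ = b ^ 2 * (y ⬝ᵥ y) := by rw [dotProduct, Finset.mul_sum]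
    _ ≤ b ^ 2 * (w ⬝ᵥ w) := by
        gcongr
        exact transpose_mulVec_dotProduct_le hX.right_orthonormal w

lemma projCol_firstCols (hX : IsThinSVD X U s V) {k : ℕ} (h : k ≤ p) :
    projCol (firstCols V k h) = diagConj V (ltIndicator k) := by
  rw [projCol_eq_mul_transpose (firstCols_transpose_mul_self hX.right_orthonormal h),
    firstCols_mul_transpose]

lemma isStarProjection_projCol (hX : IsThinSVD X U s V) {k : ℕ} (h : k ≤ p) :
    IsStarProjection (projCol (firstCols V k h)) := by
  rw [projCol_eq_mul_transpose (firstCols_transpose_mul_self hX.right_orthonormal h)]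
  exact isStarProjection_mul_transpose (firstCols_transpose_mul_self hX.right_orthonormal h)

lemma commute_projCol (hX : IsThinSVD X U s V) {k : ℕ} (h : k ≤ p) :
    Commute (Xᵀ * X) (projCol (firstCols V k h)) := by
  rw [Commute, SemiconjBy, hX.transpose_mul_self, hX.projCol_firstCols h,
    diagConj_mul_diagConj hX.right_orthonormal, diagConj_mul_diagConj hX.right_orthonormal,
    mul_comm]

lemma norm_mul_one_sub_projCol_le (hX : IsThinSVD X U s V) {k : ℕ} (h : k ≤ p) :
    ‖Xᵀ * X * (1 - projCol (firstCols V k h))‖ ≤ sv s (k + 1) ^ 2 := by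
  rw [mul_sub, mul_one, hX.transpose_mul_self, hX.projCol_firstCols h,
    diagConj_mul_diagConj hX.right_orthonormal, diagConj_sub]
  refine l2_opNorm_diagConj_le hX.right_orthonormal (sq_nonneg _) fun i => ?_
  simp only [ltIndicator, Pi.sub_apply, Pi.mul_apply]
  split_ifs with hi
  · simp [sq_nonneg]
  · rw [mul_zero, sub_zero, abs_mul_self, sq]
    exact mul_self_le_mul_self (hX.nonneg i) (le_sv_of_le hX.antitone (by omega))

lemma exists_mul_eq_projCol (hX : IsThinSVD X U s V) {k : ℕ} (h : k ≤ p) (hk : 0 < sv s k) :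
    ∃ H, Xᵀ * X * H = projCol (firstCols V k h) ∧ projCol (firstCols V k h) * H = H ∧
      ‖H‖ ≤ (sv s k ^ 2)⁻¹ := by
  have hpos : ∀ i : Fin p, (i : ℕ) < k → sv s k ≤ s i := fun i hi =>
    sv_le_of_lt hX.antitone hX.nonneg hi
  refine ⟨diagConj V fun i => ltIndicator k i * (s i * s i)⁻¹, ?_, ?_, ?_⟩
  · rw [hX.transpose_mul_self, hX.projCol_firstCols h, diagConj_mul_diagConj hX.right_orthonormal]
    congr 1
    funext i
    simp only [ltIndicator, Pi.mul_apply]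
    split_ifs with hi
    · have := (hk.trans_le (hpos i hi)).ne'
      field_simp
    · simp
  · rw [hX.projCol_firstCols h, diagConj_mul_diagConj hX.right_orthonormal]
    congr 1
    funext i
    simp only [ltIndicator, Pi.mul_apply]
    split_ifs <;> simp
  · refine l2_opNorm_diagConj_le hX.right_orthonormal (by positivity) fun i => ?_
    simp only [ltIndicator]
    split_ifs with hi
    · rw [one_mul, abs_inv, abs_mul_self, ← sq]
      gcongr
      exact hpos i hi
    · simp [hk.le]

end IsThinSVD

section TwoSVDs

variable {m m' d p q : ℕ} {X : Matrix (Fin m) (Fin d) ℝ} {UX : Matrix (Fin m) (Fin p) ℝ}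
  {sX : Fin p → ℝ} {VX : Matrix (Fin d) (Fin p) ℝ} {Y : Matrix (Fin m') (Fin d) ℝ}
  {UY : Matrix (Fin m') (Fin q) ℝ} {sY : Fin q → ℝ} {VY : Matrix (Fin d) (Fin q) ℝ}

theorem sq_sv_le_sq_sv_add_norm_sub (hX : IsThinSVD X UX sX VX) (hY : IsThinSVD Y UY sY VY)
    {k : ℕ} (hk0 : 0 < k) (hk : k ≤ p) :
    sv sX k ^ 2 ≤ sv sY k ^ 2 + ‖Yᵀ * Y - Xᵀ * X‖ := by
  -- min–max: some `w ≠ 0` in the span of the top `k` right singular vectors of `X` is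
  -- orthogonal to the top `k - 1` of `Y`
  have hj : min (k - 1) q ≤ q := min_le_right _ _
  obtain ⟨c, hc0, hc⟩ := exists_ne_zero_mulVec_eq_zero
    ((firstCols VY _ hj)ᵀ * firstCols VX k hk) (by omega)
  set w := firstCols VX k hk *ᵥ c
  have hww : w ⬝ᵥ w = c ⬝ᵥ c := dotProduct_mulVec_self_of_transpose_mul_self
    (firstCols_transpose_mul_self hX.right_orthonormal hk) c
  have hcc : 0 < c ⬝ᵥ c := by simpa using dotProduct_star_self_pos_iff.2 hc0
  have hlow := hX.sq_sv_mul_le hk c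
  have hup := hY.le_sq_mul_of_firstCols_transpose_mulVec_eq_zero hj (b := sv sY k)
    (fun i hi => le_sv_of_le hY.antitone (by omega)) (w := w) (by rwa [mulVec_mulVec])
  have := mulVec_dotProduct_mulVec_le_add X Y w
  rw [hww] at hup this
  nlinarith

theorem le_rank_of_norm_sub_lt (hX : IsThinSVD X UX sX VX) {k : ℕ} (hk : k ≤ p)
    (h : ‖Yᵀ * Y - Xᵀ * X‖ < sv sX k ^ 2) : k ≤ Y.rank := by
  refine le_rank_of_ker_mulVecLin_mul_eq_bot Y (firstCols VX k hk) <|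
    LinearMap.ker_eq_bot'.2 fun c hc => ?_
  have hww := dotProduct_mulVec_self_of_transpose_mul_self
    (firstCols_transpose_mul_self hX.right_orthonormal hk) c
  have hlow := hX.sq_sv_mul_le hk c
  have := mulVec_dotProduct_mulVec_le_add X Y (firstCols VX k hk *ᵥ c)
  have hYw : Y *ᵥ (firstCols VX k hk *ᵥ c) = 0 := by rwa [mulVec_mulVec]
  rw [hYw, hww, dotProduct_zero, zero_add] at this
  exact dotProduct_self_eq_zero.1 <|
    le_antisymm (by nlinarith) (by simpa using dotProduct_star_self_nonneg c)

theorem norm_one_sub_projCol_mul_projCol_le (hX : IsThinSVD X UX sX VX)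
    (hY : IsThinSVD Y UY sY VY) {k : ℕ} (hkX : k ≤ p) (hkY : k ≤ q)
    (hgap : sv sY (k + 1) ^ 2 < sv sX k ^ 2) :
    ‖(1 - projCol (firstCols VY k hkY)) * projCol (firstCols VX k hkX)‖
      ≤ ‖Yᵀ * Y - Xᵀ * X‖ / (sv sX k ^ 2 - sv sY (k + 1) ^ 2) := by
  have hk : 0 < sv sX k := by
    nlinarith [sv_nonneg hX.nonneg k, sv_nonneg hY.nonneg (k + 1)]
  obtain ⟨H, hGH, hPH, hH⟩ := hX.exists_mul_eq_projCol hkX hk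
  have hQ := hY.isStarProjection_projCol hkY
  exact norm_one_sub_mul_le_norm_sub_div hQ.isIdempotentElem hQ.one_sub.norm_le
    (hY.commute_projCol hkY) hGH hPH hH (hY.norm_mul_one_sub_projCol_le hkY) hgap

theorem norm_projCol_sub_projCol_le (hX : IsThinSVD X UX sX VX) (hY : IsThinSVD Y UY sY VY)
    {k : ℕ} (hk0 : 0 < k) (hkX : k ≤ p) (hkY : k ≤ q)
    (hgap : ‖Yᵀ * Y - Xᵀ * X‖ < sv sX k ^ 2 - sv sX (k + 1) ^ 2) :
    ‖projCol (firstCols VY k hkY) - projCol (firstCols VX k hkX)‖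
      ≤ ‖Yᵀ * Y - Xᵀ * X‖ / (sv sX k ^ 2 - sv sX (k + 1) ^ 2 - ‖Yᵀ * Y - Xᵀ * X‖) := by
  set e := ‖Yᵀ * Y - Xᵀ * X‖
  have he : ‖Xᵀ * X - Yᵀ * Y‖ = e := norm_sub_rev _ _
  have hweyl : sv sX k ^ 2 ≤ sv sY k ^ 2 + e := sq_sv_le_sq_sv_add_norm_sub hX hY hk0 hkX
  have hweyl' : sv sY (k + 1) ^ 2 ≤ sv sX (k + 1) ^ 2 + e := by
    by_cases hk1 : k + 1 ≤ q
    · exact he ▸ sq_sv_le_sq_sv_add_norm_sub hY hX k.succ_pos hk1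
    · rw [sv_of_le (by omega)]
      nlinarith [norm_nonneg (Yᵀ * Y - Xᵀ * X)]
  have hD : 0 < sv sX k ^ 2 - sv sX (k + 1) ^ 2 - e := by linarith
  refine norm_sub_le_of_isStarProjection (hX.isStarProjection_projCol hkX)
    (hY.isStarProjection_projCol hkY) (by positivity) ?_ ?_
  · refine (norm_one_sub_projCol_mul_projCol_le hX hY hkX hkY (by linarith)).trans ?_
    exact div_le_div_of_nonneg_left (norm_nonneg _) hD (by linarith)
  · refine (norm_one_sub_projCol_mul_projCol_le hY hX hkY hkX (by linarith)).trans ?_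
    rw [he]
    exact div_le_div_of_nonneg_left (norm_nonneg _) hD (by linarith)

end TwoSVDs

theorem statement13_general
    {n d t k : ℕ} (hk0 : 0 < k)
    (A : Matrix (Fin n) (Fin d) ℝ)
    (UA : Matrix (Fin n) (Fin (min n d)) ℝ) (sA : Fin (min n d) → ℝ)
    (VA : Matrix (Fin d) (Fin (min n d)) ℝ)
    (hSVD : IsThinSVD A UA sA VA)
    (hkp : k ≤ min n d) (hktd : k ≤ min t d)
    (hgap : sv sA (k + 1) < sv sA k)
    (S : Matrix (Fin t) (Fin n) ℝ) (ε : ℝ)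
    (hGram : spec (Aᵀ * Sᵀ * S * A - Aᵀ * A) ≤ ε * sv sA 1 ^ 2)
    (hε : ε < (sv sA k ^ 2 - sv sA (k + 1) ^ 2) / sv sA 1 ^ 2) :
    k ≤ (S * A).rank ∧
    ∀ (US : Matrix (Fin t) (Fin (min t d)) ℝ) (sS : Fin (min t d) → ℝ)
      (VS : Matrix (Fin d) (Fin (min t d)) ℝ), IsThinSVD (S * A) US sS VS →
      d2 (firstCols VS k hktd) (firstCols VA k hkp)
        ≤ ε / ((sv sA k ^ 2 - sv sA (k + 1) ^ 2) / sv sA 1 ^ 2 - ε) := by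
  have he : ‖(S * A)ᵀ * (S * A) - Aᵀ * A‖ ≤ ε * sv sA 1 ^ 2 := by
    rwa [spec_eq_norm, Matrix.mul_assoc _ S A, ← transpose_mul] at hGram
  have hσ1 : 0 < sv sA 1 ^ 2 := by
    nlinarith [sv_antitone hSVD.antitone hSVD.nonneg hk0, sv_nonneg hSVD.nonneg (k + 1)]
  have hε' : ε * sv sA 1 ^ 2 < sv sA k ^ 2 - sv sA (k + 1) ^ 2 := (lt_div_iff₀ hσ1).1 hε
  refine ⟨le_rank_of_norm_sub_lt hSVD hkp (by nlinarith), fun US sS VS hS => ?_⟩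
  calc d2 (firstCols VS k hktd) (firstCols VA k hkp)
      ≤ ‖(S * A)ᵀ * (S * A) - Aᵀ * A‖
          / (sv sA k ^ 2 - sv sA (k + 1) ^ 2 - ‖(S * A)ᵀ * (S * A) - Aᵀ * A‖) :=
        norm_projCol_sub_projCol_le hSVD hS hk0 hkp hktd (by linarith)
    _ ≤ ε * sv sA 1 ^ 2 / (sv sA k ^ 2 - sv sA (k + 1) ^ 2 - ε * sv sA 1 ^ 2) :=
        div_le_div₀ ((norm_nonneg _).trans he) he (by linarith) (by linarith)
    _ = ε / ((sv sA k ^ 2 - sv sA (k + 1) ^ 2) / sv sA 1 ^ 2 - ε) := by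
        rw [div_sub' hσ1.ne', div_div_eq_mul_div, mul_comm (sv sA 1 ^ 2) ε]

/-- deterministic left-sketching lemma. If
`‖Aᵀ Sᵀ S A − Aᵀ A‖₂ ≤ ε σ₁(A)²` with `ε < gap_k(A)`, then `S A` has rank at least `k`
and `d₂(V_{SA,k}, V_{A,k}) ≤ ε / (gap_k(A) − ε)`. -/
theorem statement13
    {n d t k : ℕ} (hk0 : 0 < k)
    (A : Matrix (Fin n) (Fin d) ℝ)
    (UA : Matrix (Fin n) (Fin (min n d)) ℝ) (sA : Fin (min n d) → ℝ)
    (VA : Matrix (Fin d) (Fin (min n d)) ℝ)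
    (hSVD : IsThinSVD A UA sA VA)
    (hkrank : k ≤ A.rank) (hkp : k ≤ min n d) (hktd : k ≤ min t d)
    (hgap : sv sA (k + 1) < sv sA k)
    (S : Matrix (Fin t) (Fin n) ℝ) (ε : ℝ)
    (hGram : spec (Aᵀ * Sᵀ * S * A - Aᵀ * A) ≤ ε * sv sA 1 ^ 2)
    (hε : ε < (sv sA k ^ 2 - sv sA (k + 1) ^ 2) / sv sA 1 ^ 2) :
    k ≤ (S * A).rank ∧
    ∀ (US : Matrix (Fin t) (Fin (min t d)) ℝ) (sS : Fin (min t d) → ℝ)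
      (VS : Matrix (Fin d) (Fin (min t d)) ℝ), IsThinSVD (S * A) US sS VS →
      d2 (firstCols VS k hktd) (firstCols VA k hkp)
        ≤ ε / ((sv sA k ^ 2 - sv sA (k + 1) ^ 2) / sv sA 1 ^ 2 - ε) :=
  statement13_general hk0 A UA sA VA hSVD hkp hktd hgap S ε hGram hε
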